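/- arXiv:2506.11265 — 3 statements merged into one kernel-verified Lean document; each statement's English description precedes it below -/
import Mathlib

section
/- Let 𝒯 = {T_v} be an (n,d)-pre-trianguloid with n ≥ 2 and d ≥ 2. (i) (Contraction) For every j̄ ∈ [d̄], the topes T_v with v_j̄ = 0, viewed as topes between [n] and [d̄]∖{j̄}, form an (n, d−1)-pre-trianguloid. (ii) (Deletion) For every i ∈ [n]: for every lattice point v' of (n−1)Δ^{d−1} there exists a lattice point v of nΔ^{d−1} with RD(T_v|_{[n]∖{i}}) = v'; any two topes of 𝒯 whose restrictions to [n]∖{i} have the same right degree vector have equal restrictions; and the resulting collection {T'_{v'}}, where T'_{v'} is the common restriction with right degree vector v', is an (n−1, d)-pre-trianguloid. -/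
open Finset

/-- A bipartite graph between `α` and `β`, identified with its edge set. -/
abbrev BGraph (α β : Type*) := Finset (α × β)

section BipartiteDefs

variable {α β : Type*} [DecidableEq α] [DecidableEq β]

/-- Left degree vector. -/
def LD (G : BGraph α β) (a : α) : ℕ := (G.filter fun e => e.1 = a).card

/-- Right degree vector. -/
def RD (G : BGraph α β) (b : β) : ℕ := (G.filter fun e => e.2 = b).card

/-- The simple graph on `α ⊕ β` associated to a bipartite edge set. -/
def toGraph (G : BGraph α β) : SimpleGraph (α ⊕ β) :=
  SimpleGraph.fromRel fun x y => ∃ a b, x = Sum.inl a ∧ y = Sum.inr b ∧ (a, b) ∈ G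

/-- Acyclicity of a bipartite edge set. -/
def Acyclic (G : BGraph α β) : Prop := (toGraph G).IsAcyclic

/-- `U` is a tree on the vertex set `I ⊔ J`. -/
def IsTreeOn (U : BGraph α β) (I : Finset α) (J : Finset β) : Prop :=
  (∀ e ∈ U, e.1 ∈ I ∧ e.2 ∈ J) ∧ Acyclic U ∧
    ∀ x y : α ⊕ β, Sum.elim (· ∈ I) (· ∈ J) x → Sum.elim (· ∈ I) (· ∈ J) y →
      (toGraph U).Reachable x y

/-- `M` is a perfect matching between `I` and `J`. -/
def IsMatching (M : BGraph α β) (I : Finset α) (J : Finset β) : Prop :=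
  (∀ e ∈ M, e.1 ∈ I ∧ e.2 ∈ J) ∧ (∀ a ∈ I, ∃! b : β, (a, b) ∈ M) ∧
    ∀ b ∈ J, ∃! a : α, (a, b) ∈ M

/-- Compatibility of two bipartite graphs. -/
def Compatible (G G' : BGraph α β) : Prop :=
  ∀ (I : Finset α) (J : Finset β) (M M' : BGraph α β),
    M ⊆ G → M' ⊆ G' → IsMatching M I J → IsMatching M' I J → M = M'

end BipartiteDefs

section TopeDefs

variable {n d : ℕ}

/-- The graph of a tope `T : [n] → [d]`. -/
def topeGraph (T : Fin n → Fin d) : BGraph (Fin n) (Fin d) :=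
  Finset.univ.image fun i => (i, T i)

/-- The position (right degree vector) of a tope. -/
def topePos (T : Fin n → Fin d) : Fin d → ℕ :=
  fun j => (Finset.univ.filter fun i => T i = j).card

/-- Standard unit vector `e_j`. -/
def unitVec (j : Fin d) : Fin d → ℕ := fun k => if k = j then 1 else 0

end TopeDefs

/-! Fix a lattice point `p` of `(n-1)Δ`. The sector axiom says that `T_{p+e_t}(i) = k` forces
`T_{p+e_k}(i) = k`, and comparing fibre sizes, `T_{p+e_t}` misses exactly one element of the
fibre of `T_{p+e_k}` over `k ≠ t`. (The topes `T_{p+e_t}` are the orientations towards `t` of a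
spanning tree of `K_{n,d}`.) A Hall-type count shows that for `S ∋ s` and `t ∉ S`, `T_{p+e_t}`
sends some element of `⋃_{k ∈ S} T_{p+e_k}⁻¹(k)` outside `S`; this plays the role of
acyclicity and yields the key fact: if `T_{p+e_a}(i₀) = a` and `T_{p+e_b}(i₀) = b`, then
`T_{p+e_a}` and `T_{p+e_b}` agree off `i₀`.

Deletion follows, since a tope `T_v` whose restriction to `[n] ∖ {i₀}` has position `p` is
`T_{p+e_c}` with `c = T_v(i₀)`. Contraction is routine: topes at points with `v_{j₀} = 0`
never take the value `j₀`. -/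

lemma sum_add_unitVec {m : ℕ} (u : Fin m → ℕ) (j : Fin m) :
    ∑ k, (u + unitVec j) k = (∑ k, u k) + 1 := by
  simp [Finset.sum_add_distrib, unitVec]

lemma sum_topePos {n d : ℕ} (f : Fin n → Fin d) : ∑ k, topePos f k = n := by
  simp only [topePos]
  rw [← Finset.card_eq_sum_card_fiberwise (fun _ _ => Finset.mem_univ _), Finset.card_univ,
    Fintype.card_fin]

lemma topePos_comp_succAbove_add {n d : ℕ} (f : Fin (n + 1) → Fin d) (i : Fin (n + 1)) :
    topePos (f ∘ i.succAbove) + unitVec (f i) = topePos f := by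
  funext k
  simp only [topePos, Pi.add_apply, unitVec, Finset.card_filter, Function.comp_apply,
    Fin.sum_univ_succAbove _ i, eq_comm (a := k)]
  ring

lemma insertNth_add_unitVec {d : ℕ} (j₀ : Fin (d + 1)) (u : Fin d → ℕ) (j : Fin d) :
    Fin.insertNth j₀ 0 (u + unitVec j) = Fin.insertNth j₀ 0 u + unitVec (j₀.succAbove j) := by
  funext k
  cases k using Fin.succAboveCases j₀ with
  | x => simp [unitVec]
  | p k => simp [unitVec]

/-- The default value `0` is never used at lattice points with `v_{j₀} = 0`. -/
def contraction {n d : ℕ} [NeZero d] (T : (Fin (d + 1) → ℕ) → Fin n → Fin (d + 1))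
    (j₀ : Fin (d + 1)) : (Fin d → ℕ) → Fin n → Fin d :=
  fun v i => ((finSuccEquiv' j₀) (T (Fin.insertNth j₀ 0 v) i)).getD 0

/-- The sector axiom gives `T_{p+e_c}(i₀) = c` for `c = T_{p+e_0}(i₀)`, so `p + e_c` is a lift of
`p` whose restriction has position `p`. -/
def deletion {n d : ℕ} [NeZero d] (T : (Fin d → ℕ) → Fin (n + 1) → Fin d) (i₀ : Fin (n + 1)) :
    (Fin d → ℕ) → Fin n → Fin d :=
  fun p => T (p + unitVec (T (p + unitVec 0) i₀)) ∘ i₀.succAbove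

structure IsPreTrianguloid {n d : ℕ} (T : (Fin d → ℕ) → Fin n → Fin d) : Prop where
  topePos_eq : ∀ v : Fin d → ℕ, ∑ j, v j = n → topePos (T v) = v
  sector : ∀ (u : Fin d → ℕ) (j j' : Fin d), (∑ k, u k) + 1 = n →
    ∀ i, T (u + unitVec j') i = j → T (u + unitVec j) i = j

namespace IsPreTrianguloid

variable {n d : ℕ} {T : (Fin d → ℕ) → Fin n → Fin d}

lemma apply_ne_of_eq_zero (hT : IsPreTrianguloid T) {v : Fin d → ℕ} (hv : ∑ j, v j = n)
    {j : Fin d} (hj : v j = 0) (i : Fin n) : T v i ≠ j := by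
  intro h
  have := congrFun (hT.topePos_eq v hv) j
  rw [hj, topePos, Finset.card_eq_zero, Finset.filter_eq_empty_iff] at this
  exact this (Finset.mem_univ i) h

section Star

variable {p : Fin d → ℕ}

lemma card_filter_apply_eq (hT : IsPreTrianguloid T) (hp : (∑ k, p k) + 1 = n) (t k : Fin d) :
    #{i | T (p + unitVec t) i = k} = p k + unitVec t k :=
  congrFun (hT.topePos_eq _ (by rw [sum_add_unitVec, hp])) k

lemma card_filter_apply_mem (hT : IsPreTrianguloid T) (hp : (∑ k, p k) + 1 = n) (t : Fin d)
    (S : Finset (Fin d)) :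
    #{i | T (p + unitVec t) i ∈ S} = (∑ k ∈ S, p k) + if t ∈ S then 1 else 0 := by
  rw [Finset.card_eq_sum_card_fiberwise (s := {i | T (p + unitVec t) i ∈ S}) (t := S)
    fun i hi => (Finset.mem_filter.1 hi).2]
  calc ∑ k ∈ S, #{i ∈ {i | T (p + unitVec t) i ∈ S} | T (p + unitVec t) i = k}
      = ∑ k ∈ S, (p k + unitVec t k) := Finset.sum_congr rfl fun k hk => by
        rw [← hT.card_filter_apply_eq hp, Finset.filter_filter]
        congr 1; ext i; simp only [Finset.mem_filter, Finset.mem_univ, true_and]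
        exact ⟨And.right, fun h => ⟨h ▸ hk, h⟩⟩
    _ = _ := by simp [Finset.sum_add_distrib, unitVec]

lemma apply_eq_of_ne_of_apply_ne (hT : IsPreTrianguloid T) (hp : (∑ k, p k) + 1 = n)
    {t k : Fin d} {x e : Fin n} (htk : t ≠ k) (hx : T (p + unitVec k) x = k)
    (hxt : T (p + unitVec t) x ≠ k) (he : T (p + unitVec k) e = k) (hex : e ≠ x) :
    T (p + unitVec t) e = k := by
  have hsub : ({i | T (p + unitVec t) i = k} : Finset _) ⊆
      ({i | T (p + unitVec k) i = k} : Finset _).erase x :=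
    fun i hi => by
      rw [Finset.mem_filter] at hi
      exact Finset.mem_erase.2 ⟨by rintro rfl; exact hxt hi.2,
        Finset.mem_filter.2 ⟨hi.1, hT.sector p k t hp i hi.2⟩⟩
  have hcard : #(({i | T (p + unitVec k) i = k} : Finset _).erase x) ≤
      #{i | T (p + unitVec t) i = k} := by
    rw [Finset.card_erase_of_mem (by simpa using hx), hT.card_filter_apply_eq hp,
      hT.card_filter_apply_eq hp]
    simp [unitVec, htk.symm]
  have hmem : e ∈ ({i | T (p + unitVec k) i = k} : Finset _).erase x :=
    Finset.mem_erase.2 ⟨hex, by simpa using he⟩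
  rw [← Finset.eq_of_subset_of_card_le hsub hcard] at hmem
  simpa using hmem

lemma exists_apply_self_mem_apply_not_mem (hT : IsPreTrianguloid T) (hp : (∑ k, p k) + 1 = n)
    {S : Finset (Fin d)} {s t : Fin d} (hs : s ∈ S) (ht : t ∉ S) :
    ∃ i, ∃ k ∈ S, T (p + unitVec k) i = k ∧ T (p + unitVec t) i ∉ S := by
  by_contra! h
  have hsub : ({i | T (p + unitVec s) i ∈ S} : Finset _) ⊆
      ({i | T (p + unitVec t) i ∈ S} : Finset _) :=
    fun i hi => by
      rw [Finset.mem_filter] at hi ⊢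
      exact ⟨hi.1, h i _ hi.2 (hT.sector p _ s hp i rfl)⟩
  have := Finset.card_le_card hsub
  rw [hT.card_filter_apply_mem hp, hT.card_filter_apply_mem hp, if_pos hs, if_neg ht] at this
  omega

lemma apply_eq_apply_of_apply_self (hT : IsPreTrianguloid T) (hp : (∑ k, p k) + 1 = n)
    {a b : Fin d} {i₀ i : Fin n} (ha : T (p + unitVec a) i₀ = a) (hb : T (p + unitVec b) i₀ = b)
    (hi : i ≠ i₀) : T (p + unitVec a) i = T (p + unitVec b) i := by
  by_contra hne
  set S : Finset (Fin d) :=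
    {y | ∃ e ≠ i₀, T (p + unitVec a) e = y ∧ T (p + unitVec b) e ≠ y} with hS
  have hSab : ∀ y ∈ S, y ≠ a ∧ y ≠ b := by
    intro y hy
    obtain ⟨e, he, hea, heb⟩ := by simpa [hS] using hy
    refine ⟨?_, ?_⟩
    · rintro rfl
      by_cases hab : b = y
      · exact heb (hab ▸ hea)
      · exact heb (hT.apply_eq_of_ne_of_apply_ne hp hab ha (hb.trans_ne hab) hea he)
    · rintro rfl
      exact heb (hT.sector p _ a hp e hea)
  have hiS : T (p + unitVec a) i ∈ S := by simpa [hS] using ⟨i, hi, rfl, Ne.symm hne⟩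
  obtain ⟨e, y, hyS, hey, heS⟩ :=
    hT.exists_apply_self_mem_apply_not_mem hp hiS fun haS => (hSab a haS).1 rfl
  -- The element `e` produced by the Hall count is itself a disagreement, so `T_{p+e_a}(e) ∈ S`.
  obtain ⟨e₁, he₁, he₁a, he₁b⟩ := by simpa [hS] using hyS
  have hea : T (p + unitVec a) e ≠ y := fun h => heS (h ▸ hyS)
  have heb : T (p + unitVec b) e = y :=
    hT.apply_eq_of_ne_of_apply_ne hp (hSab y hyS).2.symm (hT.sector p _ a hp e₁ he₁a) he₁b hey
      (by rintro rfl; exact hea he₁a)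
  have he : e ≠ i₀ := by rintro rfl; exact (hSab y hyS).2 (heb.symm.trans hb)
  exact heS (by simpa [hS] using ⟨e, he, rfl, heb ▸ Ne.symm hea⟩)

end Star

section Contraction

variable {T : (Fin (d + 1) → ℕ) → Fin n → Fin (d + 1)} [NeZero d] {j₀ : Fin (d + 1)}

lemma succAbove_contraction_apply (hT : IsPreTrianguloid T) {v : Fin d → ℕ} (hv : ∑ j, v j = n)
    (i : Fin n) :
    j₀.succAbove (contraction T j₀ v i) = T (Fin.insertNth j₀ 0 v) i := by
  obtain ⟨k, hk⟩ := Fin.exists_succAbove_eq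
    (hT.apply_ne_of_eq_zero (by simpa using hv) (Fin.insertNth_apply_same j₀ 0 v) i)
  rw [contraction, ← hk, finSuccEquiv'_succAbove]
  rfl

lemma contraction_apply_eq_iff (hT : IsPreTrianguloid T) {v : Fin d → ℕ} (hv : ∑ j, v j = n)
    (i : Fin n) (k : Fin d) : contraction T j₀ v i = k ↔ T (Fin.insertNth j₀ 0 v) i = j₀.succAbove k := by
  rw [← hT.succAbove_contraction_apply hv, Fin.succAbove_right_inj]

theorem isPreTrianguloid_contraction (hT : IsPreTrianguloid T) (j₀ : Fin (d + 1)) :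
    IsPreTrianguloid (contraction T j₀) where
  topePos_eq v hv := funext fun k => by
    simp only [topePos, hT.contraction_apply_eq_iff hv]
    exact (congrFun (hT.topePos_eq _ (by simpa using hv)) (j₀.succAbove k)).trans (by simp)
  sector u j j' hu i h := by
    have hsum : ∀ c : Fin d, ∑ k, (u + unitVec c) k = n := fun c => by rw [sum_add_unitVec, hu]
    rw [hT.contraction_apply_eq_iff (hsum j'), insertNth_add_unitVec] at h
    rw [hT.contraction_apply_eq_iff (hsum j), insertNth_add_unitVec]
    exact hT.sector _ _ _ (by simpa using hu) i h

lemma succAbove_contraction_comp_succAbove (hT : IsPreTrianguloid T) {v : Fin (d + 1) → ℕ}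
    (hv : ∑ j, v j = n) (hv₀ : v j₀ = 0) (i : Fin n) :
    j₀.succAbove (contraction T j₀ (v ∘ j₀.succAbove) i) = T v i := by
  have hins : Fin.insertNth j₀ 0 (v ∘ j₀.succAbove) = v := by
    rw [← hv₀]
    exact Fin.insertNth_self_removeNth j₀ v
  rw [Fin.sum_univ_succAbove v j₀, hv₀, zero_add] at hv
  rw [hT.succAbove_contraction_apply (v := v ∘ j₀.succAbove) hv, hins]

end Contraction

section Deletion

variable {T : (Fin d → ℕ) → Fin (n + 1) → Fin d} {i₀ : Fin (n + 1)} {p : Fin d → ℕ}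

lemma topePos_restrict_add (hT : IsPreTrianguloid T) {v : Fin d → ℕ} (hv : ∑ j, v j = n + 1)
    (i₀ : Fin (n + 1)) : topePos (T v ∘ i₀.succAbove) + unitVec (T v i₀) = v :=
  (topePos_comp_succAbove_add _ _).trans (hT.topePos_eq v hv)

lemma topePos_restrict_of_apply (hT : IsPreTrianguloid T) (hp : (∑ k, p k) + 1 = n + 1)
    {c : Fin d} (hc : T (p + unitVec c) i₀ = c) :
    topePos (T (p + unitVec c) ∘ i₀.succAbove) = p := by
  have := hT.topePos_restrict_add (v := p + unitVec c) (by rw [sum_add_unitVec, hp]) i₀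
  rw [hc] at this
  exact add_right_cancel this

lemma restrict_eq_of_topePos_eq (hT : IsPreTrianguloid T) {v w : Fin d → ℕ}
    (hv : ∑ j, v j = n + 1) (hw : ∑ j, w j = n + 1)
    (h : topePos (T v ∘ i₀.succAbove) = topePos (T w ∘ i₀.succAbove)) :
    T v ∘ i₀.succAbove = T w ∘ i₀.succAbove := by
  have hv' := hT.topePos_restrict_add hv i₀
  have hw' := hT.topePos_restrict_add hw i₀
  rw [h] at hv'
  funext l
  have := hT.apply_eq_apply_of_apply_self (by rw [sum_topePos]) (congrArg (T · i₀) hv')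
    (congrArg (T · i₀) hw') (i₀.succAbove_ne l)
  rwa [hv', hw'] at this

variable [NeZero d]

lemma deletion_eq_of_apply (hT : IsPreTrianguloid T) (hp : (∑ k, p k) + 1 = n + 1) {c : Fin d}
    (hc : T (p + unitVec c) i₀ = c) : deletion T i₀ p = T (p + unitVec c) ∘ i₀.succAbove :=
  hT.restrict_eq_of_topePos_eq (by rw [sum_add_unitVec, hp]) (by rw [sum_add_unitVec, hp]) <| by
    rw [hT.topePos_restrict_of_apply hp (hT.sector p _ 0 hp i₀ rfl),
      hT.topePos_restrict_of_apply hp hc]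

lemma topePos_deletion (hT : IsPreTrianguloid T) (hp : ∑ k, p k = n) :
    topePos (deletion T i₀ p) = p :=
  hT.topePos_restrict_of_apply (by rw [hp]) (hT.sector p _ 0 (by rw [hp]) i₀ rfl)

lemma deletion_topePos_restrict (hT : IsPreTrianguloid T) {v : Fin d → ℕ}
    (hv : ∑ j, v j = n + 1) :
    deletion T i₀ (topePos (T v ∘ i₀.succAbove)) = T v ∘ i₀.succAbove := by
  have := hT.deletion_eq_of_apply (p := topePos (T v ∘ i₀.succAbove)) (c := T v i₀)
    (by rw [sum_topePos]) (by rw [hT.topePos_restrict_add hv])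
  rwa [hT.topePos_restrict_add hv] at this

lemma exists_topePos_restrict_eq (hT : IsPreTrianguloid T) (hp : ∑ k, p k = n) :
    ∃ v : Fin d → ℕ, ∑ j, v j = n + 1 ∧ topePos (T v ∘ i₀.succAbove) = p :=
  ⟨_, by rw [sum_add_unitVec, hp], hT.topePos_deletion hp⟩

theorem isPreTrianguloid_deletion (hT : IsPreTrianguloid T) (i₀ : Fin (n + 1)) :
    IsPreTrianguloid (deletion T i₀) where
  topePos_eq _ hp := hT.topePos_deletion hp
  sector u j j' hu l h := by
    set c := T (u + unitVec j + unitVec j') i₀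
    have hsum : ∀ k : Fin d, (∑ m, (u + unitVec k) m) + 1 = n + 1 := fun k => by
      rw [sum_add_unitVec, hu]
    have hc' : T (u + unitVec j' + unitVec c) i₀ = c :=
      hT.sector _ c j (hsum j') i₀ (by rw [add_right_comm])
    have hc : T (u + unitVec j + unitVec c) i₀ = c := hT.sector _ c j' (hsum j) i₀ rfl
    rw [hT.deletion_eq_of_apply (hsum j') hc', Function.comp_apply, add_right_comm] at h
    rw [hT.deletion_eq_of_apply (hsum j) hc, Function.comp_apply, add_right_comm]
    exact hT.sector _ j j' (hsum c) _ h

end Deletion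

end IsPreTrianguloid

theorem statement12 {n d : ℕ}
    (T : (Fin (d + 2) → ℕ) → Fin (n + 2) → Fin (d + 2))
    (hpos : ∀ v : Fin (d + 2) → ℕ, (∑ j, v j) = n + 2 → topePos (T v) = v)
    (hsector : ∀ (u : Fin (d + 2) → ℕ) (j j' : Fin (d + 2)), (∑ k, u k) + 1 = n + 2 →
      ∀ i, T (u + unitVec j') i = j → T (u + unitVec j) i = j) :
    (∀ j0 : Fin (d + 2), ∃ T' : (Fin (d + 1) → ℕ) → Fin (n + 2) → Fin (d + 1),
      (∀ v' : Fin (d + 1) → ℕ, (∑ j, v' j) = n + 2 → topePos (T' v') = v') ∧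
      (∀ (u' : Fin (d + 1) → ℕ) (j j' : Fin (d + 1)), (∑ k, u' k) + 1 = n + 2 →
        ∀ i, T' (u' + unitVec j') i = j → T' (u' + unitVec j) i = j) ∧
      (∀ v : Fin (d + 2) → ℕ, (∑ j, v j) = n + 2 → v j0 = 0 →
        ∀ i, j0.succAbove (T' (v ∘ j0.succAbove) i) = T v i)) ∧
    (∀ i0 : Fin (n + 2),
      (∀ v' : Fin (d + 2) → ℕ, (∑ j, v' j) = n + 1 →
        ∃ v : Fin (d + 2) → ℕ, ((∑ j, v j) = n + 2) ∧
          topePos (T v ∘ i0.succAbove) = v') ∧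
      (∀ v w : Fin (d + 2) → ℕ, (∑ j, v j) = n + 2 → (∑ j, w j) = n + 2 →
        topePos (T v ∘ i0.succAbove) = topePos (T w ∘ i0.succAbove) →
        T v ∘ i0.succAbove = T w ∘ i0.succAbove) ∧
      (∃ T'' : (Fin (d + 2) → ℕ) → Fin (n + 1) → Fin (d + 2),
        (∀ v' : Fin (d + 2) → ℕ, (∑ j, v' j) = n + 1 → topePos (T'' v') = v') ∧
        (∀ (u : Fin (d + 2) → ℕ) (j j' : Fin (d + 2)), (∑ k, u k) + 1 = n + 1 →
          ∀ i, T'' (u + unitVec j') i = j → T'' (u + unitVec j) i = j) ∧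
        (∀ v : Fin (d + 2) → ℕ, (∑ j, v j) = n + 2 →
          T'' (topePos (T v ∘ i0.succAbove)) = T v ∘ i0.succAbove))) := by
  have hT : IsPreTrianguloid T := ⟨hpos, hsector⟩
  refine ⟨fun j₀ => ?_, fun i₀ => ?_⟩
  · have hT' := hT.isPreTrianguloid_contraction j₀
    exact ⟨contraction T j₀, hT'.topePos_eq, hT'.sector,
      fun v hv hv₀ i => hT.succAbove_contraction_comp_succAbove hv hv₀ i⟩
  · have hT'' := hT.isPreTrianguloid_deletion i₀
    exact ⟨fun v' hv' => hT.exists_topePos_restrict_eq hv',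
      fun v w hv hw h => hT.restrict_eq_of_topePos_eq hv hw h,
      deletion T i₀, hT''.topePos_eq, hT''.sector, fun v hv => hT.deletion_topePos_restrict hv⟩
end

section
/- Let G and G' be distinct spanning trees of K_{n,d} and let e ∈ G and e' ∈ G' be edges such that G ∖ {e} = G' ∖ {e'} = H. Let I^{(1)} ⊔ J̄^{(1)} and I^{(2)} ⊔ J̄^{(2)} be the vertex sets of the two connected components of the forest H (with I^{(k)} ⊆ [n] and J̄^{(k)} ⊆ [d̄]). Then G and G' are compatible if and only if either e joins a vertex of I^{(1)} to a vertex of J̄^{(2)} and e' joins a vertex of I^{(2)} to a vertex of J̄^{(1)}, or e joins a vertex of I^{(2)} to a vertex of J̄^{(1)} and e' joins a vertex of I^{(1)} to a vertex of J̄^{(2)}. In particular, if G and G' are compatible then e and e' share no vertex. -/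
/-!
Let `H = G \ e = G' \ e'`. As `G` and `G'` are trees, `e` and `e'` are bridges, so each of them
joins the two components of `H`.

If they join them in the same direction, paths in `H` from `e.1` to `e'.1` and from `e.2` to
`e'.2` close up with `e` and `e'` into an even cycle, whose two perfect matchings lie in `G` and
in `G'` and differ.

If they join them in opposite directions, look at the left minus the right vertices that a perfect
matching covers in the first component of `H`: this surplus counts its edges leaving the component
minus those entering it, so it is `[e ∈ M] ≥ 0` for a matching `M` in `G` and `-[e' ∈ M'] ≤ 0` for
a matching `M'` in `G'`. If `M` and `M'` cover the same vertices, neither uses its extra edge, and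
both lie in the forest `H`, where a perfect matching is unique.
-/

open Finset

/-- A spanning tree of the complete bipartite graph `K_{n,d}`. -/
def IsSpanningTree {n d : ℕ} (G : BGraph (Fin n) (Fin d)) : Prop :=
  IsTreeOn G Finset.univ Finset.univ

section Graph

variable {α β : Type*} {U V : BGraph α β}

open SimpleGraph Sum

@[simp]
lemma toGraph_adj_inl_inr {a : α} {b : β} :
    (toGraph U).Adj (inl a) (inr b) ↔ (a, b) ∈ U := by
  simp [toGraph]

lemma toGraph_adj_iff {x y : α ⊕ β} :
    (toGraph U).Adj x y ↔
      ∃ g ∈ U, (x = inl g.1 ∧ y = inr g.2) ∨ (x = inr g.2 ∧ y = inl g.1) := by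
  constructor
  · rw [toGraph, fromRel_adj]
    rintro ⟨-, ⟨a, b, rfl, rfl, hab⟩ | ⟨a, b, rfl, rfl, hab⟩⟩
    exacts [⟨_, hab, .inl ⟨rfl, rfl⟩⟩, ⟨_, hab, .inr ⟨rfl, rfl⟩⟩]
  · rintro ⟨g, hg, ⟨rfl, rfl⟩ | ⟨rfl, rfl⟩⟩
    exacts [toGraph_adj_inl_inr.2 hg, (toGraph_adj_inl_inr.2 hg).symm]

lemma toGraph_mono (h : U ⊆ V) : toGraph U ≤ toGraph V := by
  intro x y hxy
  obtain ⟨g, hg, hxy⟩ := toGraph_adj_iff.1 hxy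
  exact toGraph_adj_iff.2 ⟨g, h hg, hxy⟩

lemma toGraph_erase [DecidableEq α] [DecidableEq β] (f : α × β) :
    toGraph (U.erase f) = (toGraph U).deleteEdges {s(inl f.1, inr f.2)} := by
  ext x y
  rcases x with a | b <;> rcases y with a' | b' <;> simp [toGraph, Prod.ext_iff, and_comm]

lemma Acyclic.anti (h : U ⊆ V) (hV : Acyclic V) : Acyclic U :=
  fun _ p hp => hV (p.mapLe (toGraph_mono h)) (hp.mapLe _)

lemma Acyclic.not_reachable_erase [DecidableEq α] [DecidableEq β] (hU : Acyclic U) {f : α × β}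
    (hf : f ∈ U) :
    ¬ (toGraph (U.erase f)).Reachable (inl f.1) (inr f.2) := by
  rw [toGraph_erase, ← isBridge_iff]
  exact isAcyclic_iff_forall_adj_isBridge.1 hU (toGraph_adj_inl_inr.2 hf)

def sideColoring (U : BGraph α β) : (toGraph U).Coloring Bool :=
  Coloring.mk Sum.isLeft fun h => by
    obtain ⟨g, -, ⟨rfl, rfl⟩ | ⟨rfl, rfl⟩⟩ := toGraph_adj_iff.1 h <;> simp

end Graph

section Matching

variable {α β : Type*} {M N : BGraph α β} {I I' : Finset α} {J J' : Finset β}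

lemma isMatching_singleton (a : α) (b : β) : IsMatching {(a, b)} {a} {b} := by
  simp [IsMatching, Prod.ext_iff]

lemma IsMatching.union [DecidableEq α] [DecidableEq β] (hM : IsMatching M I J)
    (hN : IsMatching N I' J') (hI : Disjoint I I') (hJ : Disjoint J J') :
    IsMatching (M ∪ N) (I ∪ I') (J ∪ J') := by
  refine ⟨fun g hg => ?_, fun a ha => ?_, fun b hb => ?_⟩
  · rcases mem_union.1 hg with hg | hg
    exacts [⟨mem_union_left _ (hM.1 g hg).1, mem_union_left _ (hM.1 g hg).2⟩,
      ⟨mem_union_right _ (hN.1 g hg).1, mem_union_right _ (hN.1 g hg).2⟩]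
  · rcases mem_union.1 ha with ha | ha
    · obtain ⟨b, hb, hu⟩ := hM.2.1 a ha
      exact ⟨b, mem_union_left _ hb, fun b' hb' => (mem_union.1 hb').elim (hu b')
        fun h => absurd (hN.1 _ h).1 (disjoint_left.1 hI ha)⟩
    · obtain ⟨b, hb, hu⟩ := hN.2.1 a ha
      exact ⟨b, mem_union_right _ hb, fun b' hb' => (mem_union.1 hb').elim
        (fun h => absurd (hM.1 _ h).1 (disjoint_right.1 hI ha)) (hu b')⟩
  · rcases mem_union.1 hb with hb | hb
    · obtain ⟨a, ha, hu⟩ := hM.2.2 b hb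
      exact ⟨a, mem_union_left _ ha, fun a' ha' => (mem_union.1 ha').elim (hu a')
        fun h => absurd (hN.1 _ h).2 (disjoint_left.1 hJ hb)⟩
    · obtain ⟨a, ha, hu⟩ := hN.2.2 b hb
      exact ⟨a, mem_union_right _ ha, fun a' ha' => (mem_union.1 ha').elim
        (fun h => absurd (hM.1 _ h).2 (disjoint_right.1 hJ hb)) (hu a')⟩

section Counting

variable (p : α → Prop) (q : β → Prop) [DecidablePred p] [DecidablePred q]

lemma IsMatching.card_filter_fst (hM : IsMatching M I J) :
    #(M.filter (p ·.1)) = #(I.filter p) := by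
  refine card_nbij Prod.fst (fun g hg => ?_) (fun g hg g' hg' h => ?_) (fun a ha => ?_)
  · rw [mem_coe, mem_filter] at hg ⊢
    exact ⟨(hM.1 g hg.1).1, hg.2⟩
  · rw [mem_coe, mem_filter] at hg hg'
    obtain ⟨a, b⟩ := g
    obtain ⟨a', b'⟩ := g'
    obtain rfl : a = a' := h
    exact Prod.ext rfl ((hM.2.1 a (hM.1 _ hg.1).1).unique hg.1 hg'.1)
  · rw [mem_coe, mem_filter] at ha
    obtain ⟨b, hb, -⟩ := hM.2.1 a ha.1
    exact ⟨(a, b), mem_filter.2 ⟨hb, ha.2⟩, rfl⟩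

lemma IsMatching.card_filter_snd (hM : IsMatching M I J) :
    #(M.filter (q ·.2)) = #(J.filter q) := by
  refine card_nbij Prod.snd (fun g hg => ?_) (fun g hg g' hg' h => ?_) (fun b hb => ?_)
  · rw [mem_coe, mem_filter] at hg ⊢
    exact ⟨(hM.1 g hg.1).2, hg.2⟩
  · rw [mem_coe, mem_filter] at hg hg'
    obtain ⟨a, b⟩ := g
    obtain ⟨a', b'⟩ := g'
    obtain rfl : b = b' := h
    exact Prod.ext ((hM.2.2 b (hM.1 _ hg.1).2).unique hg.1 hg'.1) rfl
  · rw [mem_coe, mem_filter] at hb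
    obtain ⟨a, ha, -⟩ := hM.2.2 b hb.1
    exact ⟨(a, b), mem_filter.2 ⟨ha, hb.2⟩, rfl⟩

variable {p q}

lemma IsMatching.card_filter_le (hM : IsMatching M I J) (h : ∀ g ∈ M, p g.1 → q g.2) :
    #(I.filter p) ≤ #(J.filter q) := by
  rw [← hM.card_filter_fst p, ← hM.card_filter_snd q]
  exact card_le_card fun g hg => by
    rw [mem_filter] at hg ⊢
    exact ⟨hg.1, h g hg.1 hg.2⟩

lemma IsMatching.card_filter_lt (hM : IsMatching M I J) (h : ∀ g ∈ M, p g.1 → q g.2)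
    {f : α × β} (hf : f ∈ M) (hpf : ¬ p f.1) (hqf : q f.2) :
    #(I.filter p) < #(J.filter q) := by
  rw [← hM.card_filter_fst p, ← hM.card_filter_snd q]
  refine card_lt_card ((ssubset_iff_of_subset fun g hg => ?_).2 ⟨f, ?_, ?_⟩)
  · rw [mem_filter] at hg ⊢
    exact ⟨hg.1, h g hg.1 hg.2⟩
  · exact mem_filter.2 ⟨hf, hqf⟩
  · exact fun hf' => hpf (mem_filter.1 hf').2

lemma IsMatching.card_filter_le' (hM : IsMatching M I J) (h : ∀ g ∈ M, q g.2 → p g.1) :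
    #(J.filter q) ≤ #(I.filter p) := by
  rw [← hM.card_filter_fst p, ← hM.card_filter_snd q]
  exact card_le_card fun g hg => by
    rw [mem_filter] at hg ⊢
    exact ⟨hg.1, h g hg.1 hg.2⟩

lemma IsMatching.card_filter_lt' (hM : IsMatching M I J) (h : ∀ g ∈ M, q g.2 → p g.1)
    {f : α × β} (hf : f ∈ M) (hpf : p f.1) (hqf : ¬ q f.2) :
    #(J.filter q) < #(I.filter p) := by
  rw [← hM.card_filter_fst p, ← hM.card_filter_snd q]
  refine card_lt_card ((ssubset_iff_of_subset fun g hg => ?_).2 ⟨f, ?_, ?_⟩)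
  · rw [mem_filter] at hg ⊢
    exact ⟨hg.1, h g hg.1 hg.2⟩
  · exact mem_filter.2 ⟨hf, hpf⟩
  · exact fun hf' => hqf (mem_filter.1 hf').2

end Counting

end Matching

section Forest

variable {α β : Type*} [DecidableEq α] [DecidableEq β] {U M M' : BGraph α β}
  {I : Finset α} {J : Finset β}

open SimpleGraph Sum

/-- For `f ∈ M \ M'`, the component of `f.2` in `U \ f` is a side of a cut that `M` crosses only
at `f` and `M'` not at all, so the two matchings would cover different numbers of its left
vertices. -/
lemma IsMatching.subset_of_acyclic (hU : Acyclic U) (hMU : M ⊆ U) (hM'U : M' ⊆ U)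
    (hM : IsMatching M I J) (hM' : IsMatching M' I J) : M ⊆ M' := by
  classical
  intro f hf
  by_contra hf'
  set K := toGraph (U.erase f)
  let p a := K.Reachable (inr f.2) (inl a)
  let q b := K.Reachable (inr f.2) (inr b)
  have hcut : ∀ g ∈ U.erase f, p g.1 ↔ q g.2 := fun g hg =>
    have hadj : K.Adj (inl g.1) (inr g.2) := toGraph_adj_inl_inr.2 hg
    ⟨fun h => h.trans hadj.reachable, fun h => h.trans hadj.symm.reachable⟩
  have hsep : ¬ p f.1 := fun h => hU.not_reachable_erase (hMU hf) h.symm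
  have hM_imp : ∀ g ∈ M, p g.1 → q g.2 := by
    intro g hg hpg
    rcases eq_or_ne g f with rfl | hgf
    · exact absurd hpg hsep
    · exact (hcut g (mem_erase.2 ⟨hgf, hMU hg⟩)).1 hpg
  have hM'_imp : ∀ g ∈ M', q g.2 → p g.1 :=
    fun g hg => (hcut g (mem_erase.2 ⟨fun h => hf' (h ▸ hg), hM'U hg⟩)).2
  have := hM.card_filter_lt hM_imp hf hsep (Reachable.refl _)
  have := hM'.card_filter_le' hM'_imp
  omega

lemma IsMatching.eq_of_acyclic (hU : Acyclic U) (hMU : M ⊆ U) (hM'U : M' ⊆ U)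
    (hM : IsMatching M I J) (hM' : IsMatching M' I J) : M = M' :=
  (hM.subset_of_acyclic hU hMU hM'U hM').antisymm (hM'.subset_of_acyclic hU hM'U hMU hM)

end Forest

section Compatible

variable {α β : Type*} [DecidableEq α] [DecidableEq β] {G G' : BGraph α β} {e e' : α × β}

lemma compatible_of_crosses_opposite (p : α → Prop) (q : β → Prop)
    (hH : G.erase e = G'.erase e') (hac : Acyclic (G.erase e))
    (hcut : ∀ g ∈ G.erase e, p g.1 ↔ q g.2) (he : p e.1 ∧ ¬ q e.2) (he' : ¬ p e'.1 ∧ q e'.2) :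
    Compatible G G' := by
  classical
  intro I J M M' hMG hM'G' hM hM'
  have hM_imp : ∀ g ∈ M, q g.2 → p g.1 := by
    intro g hg hqg
    rcases eq_or_ne g e with rfl | hge
    · exact absurd hqg he.2
    · exact (hcut g (mem_erase.2 ⟨hge, hMG hg⟩)).2 hqg
  have hM'_imp : ∀ g ∈ M', p g.1 → q g.2 := by
    intro g hg hpg
    rcases eq_or_ne g e' with rfl | hge'
    · exact absurd hpg he'.1
    · exact (hcut g (hH ▸ mem_erase.2 ⟨hge', hM'G' hg⟩)).1 hpg
  have heM : e ∉ M := fun h =>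
    (hM.card_filter_lt' hM_imp h he.1 he.2).not_ge (hM'.card_filter_le hM'_imp)
  have he'M' : e' ∉ M' := fun h =>
    (hM'.card_filter_lt hM'_imp h he'.1 he'.2).not_ge (hM.card_filter_le' hM_imp)
  refine hM.eq_of_acyclic hac (fun g hg => ?_) (fun g hg => ?_) hM'
  · exact mem_erase.2 ⟨ne_of_mem_of_not_mem hg heM, hMG hg⟩
  · exact hH ▸ mem_erase.2 ⟨ne_of_mem_of_not_mem hg he'M', hM'G' hg⟩

end Compatible

section Paths

variable {α β : Type*} [DecidableEq α] [DecidableEq β] {U M N : BGraph α β}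
  {S T : Finset (α ⊕ β)}

open SimpleGraph Sum

def IsMatchingOn (M : BGraph α β) (S : Finset (α ⊕ β)) : Prop :=
  IsMatching M S.toLeft S.toRight

lemma IsMatchingOn.union (hM : IsMatchingOn M S) (hN : IsMatchingOn N T) (hST : Disjoint S T) :
    IsMatchingOn (M ∪ N) (S ∪ T) := by
  rw [IsMatchingOn, toLeft_union, toRight_union]
  exact IsMatching.union hM hN
    (disjoint_left.2 fun a ha ha' => disjoint_left.1 hST (mem_toLeft.1 ha) (mem_toLeft.1 ha'))
    (disjoint_left.2 fun b hb hb' => disjoint_left.1 hST (mem_toRight.1 hb) (mem_toRight.1 hb'))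

lemma IsMatchingOn.insert_edge (hM : IsMatchingOn M S) {a : α} {b : β} (ha : inl a ∉ S)
    (hb : inr b ∉ S) : IsMatchingOn (insert (a, b) M) (insert (inl a) (insert (inr b) S)) := by
  rw [IsMatchingOn, toLeft_insert_inl, toLeft_insert_inr, toRight_insert_inl, toRight_insert_inr,
    insert_eq, insert_eq, insert_eq]
  exact (isMatching_singleton a b).union hM (by simpa using ha) (by simpa using hb)

/-- Along a path, every other edge is taken, starting from the first one when the length is odd
and from the second one when it is even. -/
lemma SimpleGraph.Walk.IsPath.exists_isMatchingOn {x y : α ⊕ β} {p : (toGraph U).Walk x y}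
    (hp : p.IsPath) :
    ∃ M ⊆ U, IsMatchingOn M
      (if Even p.length then p.support.toFinset.erase x else p.support.toFinset) := by
  induction p with
  | nil => exact ⟨∅, empty_subset _, by simp [IsMatchingOn, IsMatching]⟩
  | @cons x z y h q ih =>
    rw [Walk.cons_isPath_iff] at hp
    obtain ⟨N, hNU, hN⟩ := ih hp.1
    have hsupp : (x :: q.support).toFinset.erase x = q.support.toFinset := by
      rw [List.toFinset_cons, erase_insert (by simpa using hp.2)]
    by_cases hq : Even q.length
    · rw [if_pos hq] at hN
      have hz : z ∈ q.support.toFinset := List.mem_toFinset.2 q.start_mem_support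
      have hx : x ∉ q.support.toFinset.erase z := fun hx =>
        hp.2 (List.mem_toFinset.1 (mem_of_mem_erase hx))
      obtain ⟨g, hg, ⟨rfl, rfl⟩ | ⟨rfl, rfl⟩⟩ := toGraph_adj_iff.1 h
      · refine ⟨insert g N, insert_subset hg hNU, ?_⟩
        have := hN.insert_edge hx (notMem_erase _ _)
        simpa [Nat.even_add_one, hq, insert_erase hz] using this
      · refine ⟨insert g N, insert_subset hg hNU, ?_⟩
        have := hN.insert_edge (notMem_erase _ _) hx
        rw [insert_comm, insert_erase hz] at this
        simpa [Nat.even_add_one, hq] using this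
    · rw [if_neg hq] at hN
      refine ⟨N, hNU, ?_⟩
      rwa [Walk.length_cons, if_pos (Nat.even_add_one.2 hq), Walk.support_cons, hsupp]

lemma SimpleGraph.Walk.IsPath.exists_isMatchingOn_erase {x y : α ⊕ β}
    {p : (toGraph U).Walk x y} (hp : p.IsPath) (hxy : x.isLeft = y.isLeft) :
    ∃ M ⊆ U, IsMatchingOn M (p.support.toFinset.erase x) := by
  have heven : Even p.length := ((sideColoring U).even_length_iff_congr p).2
    (Bool.coe_iff_coe.2 hxy)
  simpa [heven] using hp.exists_isMatchingOn

lemma IsMatchingOn.insert_union {a : α} {b : β} (hM : IsMatchingOn M (S.erase (inl a)))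
    (hN : IsMatchingOn N (T.erase (inr b))) (ha : inl a ∈ S) (hb : inr b ∈ T)
    (hST : Disjoint S T) : IsMatchingOn (insert (a, b) (M ∪ N)) (S ∪ T) := by
  have haT : inl a ∉ T := disjoint_left.1 hST ha
  have hbS : inr b ∉ S := disjoint_right.1 hST hb
  have h := (hM.union hN (hST.mono (erase_subset _ _) (erase_subset _ _))).insert_edge
    (a := a) (b := b) (by simp [haT]) (by simp [hbS])
  convert h using 1
  ext v
  simp only [mem_union, mem_insert]
  grind

end Paths

section Incompatible

variable {α β : Type*} [DecidableEq α] [DecidableEq β] {G G' : BGraph α β} {e e' : α × β}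

open SimpleGraph Sum

lemma not_compatible_of_reachable (he : e ∈ G) (he' : e' ∈ G') (hne : e ≠ e')
    (hH : G.erase e = G'.erase e')
    (h₁ : (toGraph (G.erase e)).Reachable (inl e.1) (inl e'.1))
    (h₂ : (toGraph (G.erase e)).Reachable (inr e.2) (inr e'.2))
    (hsep : ¬ (toGraph (G.erase e)).Reachable (inl e.1) (inr e.2)) :
    ¬ Compatible G G' := by
  intro hc
  obtain ⟨P₁, hP₁⟩ := h₁.exists_isPath
  obtain ⟨P₂, hP₂⟩ := h₂.exists_isPath
  set S₁ := P₁.support.toFinset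
  set S₂ := P₂.support.toFinset
  have hS : Disjoint S₁ S₂ := disjoint_left.2 fun v hv₁ hv₂ => hsep <|
    (P₁.takeUntil v (List.mem_toFinset.1 hv₁)).reachable.trans
      (P₂.takeUntil v (List.mem_toFinset.1 hv₂)).reachable.symm
  have hrev₁ : P₁.reverse.support.toFinset = S₁ := by simp [S₁]
  have hrev₂ : P₂.reverse.support.toFinset = S₂ := by simp [S₂]
  obtain ⟨N₁, hN₁H, hN₁⟩ := hP₁.exists_isMatchingOn_erase rfl
  obtain ⟨N₂, hN₂H, hN₂⟩ := hP₂.exists_isMatchingOn_erase rfl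
  obtain ⟨N₁', hN₁'H, hN₁'⟩ := hP₁.reverse.exists_isMatchingOn_erase rfl
  obtain ⟨N₂', hN₂'H, hN₂'⟩ := hP₂.reverse.exists_isMatchingOn_erase rfl
  rw [hrev₁] at hN₁'
  rw [hrev₂] at hN₂'
  have hM := hN₁.insert_union hN₂ (List.mem_toFinset.2 P₁.start_mem_support)
    (List.mem_toFinset.2 P₂.start_mem_support) hS
  have hM' := hN₁'.insert_union hN₂' (List.mem_toFinset.2 P₁.end_mem_support)
    (List.mem_toFinset.2 P₂.end_mem_support) hS
  have hMG : insert e (N₁ ∪ N₂) ⊆ G :=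
    insert_subset he ((union_subset hN₁H hN₂H).trans (erase_subset _ _))
  have hM'G' : insert e' (N₁' ∪ N₂') ⊆ G' :=
    insert_subset he' ((union_subset hN₁'H hN₂'H).trans (hH ▸ erase_subset _ _))
  have heM' : e ∈ insert e' (N₁' ∪ N₂') := hc _ _ _ _ hMG hM'G' hM hM' ▸ mem_insert_self _ _
  rcases mem_insert.1 heM' with h | h
  · exact hne h
  · exact notMem_erase e G (union_subset hN₁'H hN₂'H h)

end Incompatible

section Crossing

variable {α β : Type*} {G G' : BGraph α β} {e e' : α × β} {I₁ I₂ : Finset α} {J₁ J₂ : Finset β}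

open Sum

lemma crosses_of_not_reachable {K : SimpleGraph (α ⊕ β)} {a : α} {b : β}
    (ha : a ∈ I₁ ∨ a ∈ I₂) (hb : b ∈ J₁ ∨ b ∈ J₂)
    (hconn₁ : ∀ x y : α ⊕ β, Sum.elim (· ∈ I₁) (· ∈ J₁) x →
      Sum.elim (· ∈ I₁) (· ∈ J₁) y → K.Reachable x y)
    (hconn₂ : ∀ x y : α ⊕ β, Sum.elim (· ∈ I₂) (· ∈ J₂) x →
      Sum.elim (· ∈ I₂) (· ∈ J₂) y → K.Reachable x y)
    (hab : ¬ K.Reachable (inl a) (inr b)) : (a ∈ I₁ ∧ b ∈ J₂) ∨ (a ∈ I₂ ∧ b ∈ J₁) := by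
  rcases ha with ha | ha <;> rcases hb with hb | hb
  exacts [absurd (hconn₁ (inl a) (inr b) ha hb) hab, .inl ⟨ha, hb⟩, .inr ⟨ha, hb⟩,
    absurd (hconn₂ (inl a) (inr b) ha hb) hab]

lemma crosses_opposite_of_compatible [DecidableEq α] [DecidableEq β] (hc : Compatible G G')
    (he : e ∈ G) (he' : e' ∈ G') (hne : e ≠ e') (hH : G.erase e = G'.erase e')
    (hsep : ¬ (toGraph (G.erase e)).Reachable (inl e.1) (inr e.2))
    (hconn₁ : ∀ x y : α ⊕ β, Sum.elim (· ∈ I₁) (· ∈ J₁) x →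
      Sum.elim (· ∈ I₁) (· ∈ J₁) y → (toGraph (G.erase e)).Reachable x y)
    (hconn₂ : ∀ x y : α ⊕ β, Sum.elim (· ∈ I₂) (· ∈ J₂) x →
      Sum.elim (· ∈ I₂) (· ∈ J₂) y → (toGraph (G.erase e)).Reachable x y)
    (hcross : (e.1 ∈ I₁ ∧ e.2 ∈ J₂) ∨ (e.1 ∈ I₂ ∧ e.2 ∈ J₁))
    (hcross' : (e'.1 ∈ I₁ ∧ e'.2 ∈ J₂) ∨ (e'.1 ∈ I₂ ∧ e'.2 ∈ J₁)) :
    (e.1 ∈ I₁ ∧ e.2 ∈ J₂ ∧ e'.1 ∈ I₂ ∧ e'.2 ∈ J₁) ∨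
      (e.1 ∈ I₂ ∧ e.2 ∈ J₁ ∧ e'.1 ∈ I₁ ∧ e'.2 ∈ J₂) := by
  rcases hcross with ⟨h₁, h₂⟩ | ⟨h₁, h₂⟩ <;> rcases hcross' with ⟨h₁', h₂'⟩ | ⟨h₁', h₂'⟩
  · exact absurd hc (not_compatible_of_reachable he he' hne hH
      (hconn₁ (inl _) (inl _) h₁ h₁') (hconn₂ (inr _) (inr _) h₂ h₂') hsep)
  · exact .inl ⟨h₁, h₂, h₁', h₂'⟩
  · exact .inr ⟨h₁, h₂, h₁', h₂'⟩
  · exact absurd hc (not_compatible_of_reachable he he' hne hH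
      (hconn₂ (inl _) (inl _) h₁ h₁') (hconn₁ (inr _) (inr _) h₂ h₂') hsep)

end Crossing

theorem statement14 {n d : ℕ} (G G' : BGraph (Fin n) (Fin d))
    (hG : IsSpanningTree G) (hG' : IsSpanningTree G') (hne : G ≠ G')
    (e e' : Fin n × Fin d) (he : e ∈ G) (he' : e' ∈ G')
    (hH : G.erase e = G'.erase e')
    (I1 I2 : Finset (Fin n)) (J1 J2 : Finset (Fin d))
    (hIu : I1 ∪ I2 = Finset.univ) (hJu : J1 ∪ J2 = Finset.univ)
    (hId : Disjoint I1 I2) (hJd : Disjoint J1 J2)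
    (hedges : ∀ f ∈ G.erase e, (f.1 ∈ I1 ∧ f.2 ∈ J1) ∨ (f.1 ∈ I2 ∧ f.2 ∈ J2))
    (hconn1 : ∀ x y : Fin n ⊕ Fin d, Sum.elim (· ∈ I1) (· ∈ J1) x →
      Sum.elim (· ∈ I1) (· ∈ J1) y → (toGraph (G.erase e)).Reachable x y)
    (hconn2 : ∀ x y : Fin n ⊕ Fin d, Sum.elim (· ∈ I2) (· ∈ J2) x →
      Sum.elim (· ∈ I2) (· ∈ J2) y → (toGraph (G.erase e)).Reachable x y) :
    (Compatible G G' ↔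
      ((e.1 ∈ I1 ∧ e.2 ∈ J2 ∧ e'.1 ∈ I2 ∧ e'.2 ∈ J1) ∨
        (e.1 ∈ I2 ∧ e.2 ∈ J1 ∧ e'.1 ∈ I1 ∧ e'.2 ∈ J2))) ∧
    (Compatible G G' → e.1 ≠ e'.1 ∧ e.2 ≠ e'.2) := by
  have hHac : Acyclic (G.erase e) := hG.2.1.anti (erase_subset _ _)
  have hsep := hG.2.1.not_reachable_erase he
  have hsep' := hH ▸ hG'.2.1.not_reachable_erase he'
  have hee' : e ≠ e' := by
    rintro rfl
    exact hne (by rw [← insert_erase he, ← insert_erase he', hH])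
  have hcut : ∀ g ∈ G.erase e, g.1 ∈ I1 ↔ g.2 ∈ J1 := fun g hg => by
    rcases hedges g hg with ⟨h1, h2⟩ | ⟨h1, h2⟩
    exacts [iff_of_true h1 h2, iff_of_false (disjoint_right.1 hId h1) (disjoint_right.1 hJd h2)]
  have hI : ∀ a, a ∈ I1 ∨ a ∈ I2 := fun a => mem_union.1 (hIu ▸ mem_univ a)
  have hJ : ∀ b, b ∈ J1 ∨ b ∈ J2 := fun b => mem_union.1 (hJu ▸ mem_univ b)
  have hiff : Compatible G G' ↔ ((e.1 ∈ I1 ∧ e.2 ∈ J2 ∧ e'.1 ∈ I2 ∧ e'.2 ∈ J1) ∨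
      (e.1 ∈ I2 ∧ e.2 ∈ J1 ∧ e'.1 ∈ I1 ∧ e'.2 ∈ J2)) := by
    refine ⟨fun hc => crosses_opposite_of_compatible hc he he' hee' hH hsep hconn1 hconn2
      (crosses_of_not_reachable (hI _) (hJ _) hconn1 hconn2 hsep)
      (crosses_of_not_reachable (hI _) (hJ _) hconn1 hconn2 hsep'), ?_⟩
    rintro (⟨h1, h2, h1', h2'⟩ | ⟨h1, h2, h1', h2'⟩)
    · exact compatible_of_crosses_opposite (· ∈ I1) (· ∈ J1) hH hHac hcut
        ⟨h1, disjoint_right.1 hJd h2⟩ ⟨disjoint_right.1 hId h1', h2'⟩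
    · exact compatible_of_crosses_opposite (· ∉ I1) (· ∉ J1) hH hHac
        (fun g hg => not_congr (hcut g hg))
        ⟨disjoint_right.1 hId h1, not_not.2 h2⟩ ⟨not_not.2 h1', disjoint_right.1 hJd h2'⟩
  refine ⟨hiff, fun hc => ?_⟩
  rcases hiff.1 hc with ⟨h1, h2, h1', h2'⟩ | ⟨h1, h2, h1', h2'⟩
  · exact ⟨fun h => disjoint_left.1 hId h1 (h ▸ h1'),
      fun h => disjoint_right.1 hJd h2 (h ▸ h2')⟩
  · exact ⟨fun h => disjoint_right.1 hId h1 (h ▸ h1'),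
      fun h => disjoint_left.1 hJd h2 (h ▸ h2')⟩
end

section
/- If G and G' are distinct acyclic subgraphs of K_{n,d} with LD(G) = LD(G') and RD(G) = RD(G'), then G and G' are not compatible. -/
open Finset

/-!
Colour the edges of `G \ G'` red and those of `G' \ G` blue. Equal degree vectors give every
vertex as many red as blue edges, so from a red edge one can move to a blue edge at its right end
and from there to a red edge at that blue edge's left end. On a nonempty set `C` of red edges
mapped onto itself by this move, the move is a bijection; then `C` and the blue edges it passes
through are two disjoint perfect matchings on the same vertex sets, contradicting compatibility.
-/

section Matchings

variable {α β γ δ : Type*} [DecidableEq α] [DecidableEq β] [DecidableEq γ] [DecidableEq δ]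

theorem Finset.exists_subset_nonempty_image_eq {s : Finset γ} (hs : s.Nonempty) {f : γ → γ}
    (hf : s.image f ⊆ s) : ∃ t ⊆ s, t.Nonempty ∧ t.image f = t := by
  obtain ⟨t, ht, hmin⟩ := (s.powerset.filter fun t => t.Nonempty ∧ t.image f ⊆ t).exists_min_image
    card ⟨s, by simpa [hs] using hf⟩
  simp only [mem_filter, mem_powerset, and_imp] at ht hmin
  obtain ⟨hts, htne, htf⟩ := ht
  refine ⟨t, hts, htne, eq_of_subset_of_card_le htf ?_⟩
  exact hmin _ (htf.trans hts) (htne.image f) (image_subset_image htf)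

theorem Finset.filter_sdiff_distrib (s t : Finset γ) (p : γ → Prop) [DecidablePred p] :
    (s \ t).filter p = s.filter p \ t.filter p := by
  ext; simp only [mem_filter, mem_sdiff]; tauto

theorem Finset.image_sdiff_subset_of_card_fiber_eq {s t : Finset γ} (k : γ → δ)
    (h : ∀ x, (s.filter fun e => k e = x).card = (t.filter fun e => k e = x).card) :
    (t \ s).image k ⊆ (s \ t).image k := by
  intro x hx
  have hfib := card_sdiff_comm (h x)
  rw [← filter_sdiff_distrib, ← filter_sdiff_distrib] at hfib
  obtain ⟨e, he, rfl⟩ := mem_image.1 hx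
  obtain ⟨e', he'⟩ : ((s \ t).filter fun e' => k e' = k e).Nonempty := by
    rw [← card_pos, hfib, card_pos]; exact ⟨e, mem_filter.2 ⟨he, rfl⟩⟩
  exact mem_image.2 ⟨e', (mem_filter.1 he').1, (mem_filter.1 he').2⟩

theorem isMatching_image_fst_image_snd {M : BGraph α β}
    (h₁ : Set.InjOn Prod.fst (M : Set (α × β))) (h₂ : Set.InjOn Prod.snd (M : Set (α × β))) :
    IsMatching M (M.image Prod.fst) (M.image Prod.snd) := by
  refine ⟨fun e he => ⟨mem_image_of_mem _ he, mem_image_of_mem _ he⟩, ?_, ?_⟩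
  · intro a ha
    obtain ⟨e, he, rfl⟩ := mem_image.1 ha
    exact ⟨e.2, he, fun b hb => congrArg Prod.snd (h₁ hb he rfl)⟩
  · intro b hb
    obtain ⟨e, he, rfl⟩ := mem_image.1 hb
    exact ⟨e.1, he, fun a ha => congrArg Prod.fst (h₂ ha he rfl)⟩

theorem exists_alternating_matchings {R B : BGraph α β} (hR : R.Nonempty)
    (hRB : R.image Prod.snd ⊆ B.image Prod.snd) (hBR : B.image Prod.fst ⊆ R.image Prod.fst) :
    ∃ (I : Finset α) (J : Finset β) (M M' : BGraph α β),
      M.Nonempty ∧ M ⊆ R ∧ M' ⊆ B ∧ IsMatching M I J ∧ IsMatching M' I J := by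
  have : Nonempty (α × β) := ⟨hR.choose⟩
  have hRB' : ∀ j ∈ R.image Prod.snd, ∃ f ∈ B, f.2 = j := fun j hj => mem_image.1 (hRB hj)
  have hBR' : ∀ i ∈ B.image Prod.fst, ∃ e ∈ R, e.1 = i := fun i hi => mem_image.1 (hBR hi)
  choose! blue hblue hblue_snd using hRB'
  choose! red hred hred_fst using hBR'
  set F : α × β → α × β := fun e => red (blue e.2).1
  have hblueR : ∀ e ∈ R, blue e.2 ∈ B := fun e he => hblue _ (mem_image_of_mem _ he)
  have hFR : ∀ e ∈ R, F e ∈ R := fun e he => hred _ (mem_image_of_mem _ (hblueR e he))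
  have hF_fst : ∀ e ∈ R, (F e).1 = (blue e.2).1 :=
    fun e he => hred_fst _ (mem_image_of_mem _ (hblueR e he))
  obtain ⟨C, hCR, hCne, hCF⟩ :=
    exists_subset_nonempty_image_eq hR (image_subset_iff.2 hFR)
  have hF_inj : Set.InjOn F C := card_image_iff.1 (by rw [hCF])
  have hF_maps : Set.MapsTo F C C := fun e he => hCF ▸ mem_image_of_mem F he
  have hC_red : ∀ e ∈ C, red e.1 = e := by
    intro e he
    rw [← hCF] at he
    obtain ⟨e', he', rfl⟩ := mem_image.1 he
    rw [hF_fst e' (hCR he')]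
  have hC_fst : Set.InjOn Prod.fst (C : Set (α × β)) := fun e he e' he' h => by
    rw [← hC_red e he, h, hC_red e' he']
  have hC_snd : Set.InjOn Prod.snd (C : Set (α × β)) := fun e he e' he' h =>
    hF_inj he he' (by simp only [F, h])
  set M' := C.image fun e => ((F e).1, e.2) with hM'
  have hM'B : M' ⊆ B := by
    intro f hf
    obtain ⟨e, he, rfl⟩ := mem_image.1 hf
    convert hblueR e (hCR he) using 1
    exact Prod.ext (hF_fst e (hCR he)) (hblue_snd _ (mem_image_of_mem _ (hCR he))).symm
  have hM'_fst : M'.image Prod.fst = C.image Prod.fst := by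
    rw [image_image]
    conv_rhs => rw [← hCF, image_image]
    rfl
  have hM'_snd : M'.image Prod.snd = C.image Prod.snd := by
    rw [image_image]; rfl
  refine ⟨_, _, C, M', hCne, hCR, hM'B, isMatching_image_fst_image_snd hC_fst hC_snd, ?_⟩
  rw [← hM'_fst, ← hM'_snd]
  apply isMatching_image_fst_image_snd <;> rw [hM', coe_image] <;> apply Set.InjOn.image_of_comp
  · show Set.InjOn (Prod.fst ∘ F) C
    exact hC_fst.comp hF_inj hF_maps
  · exact hC_snd

end Matchings

theorem statement15_general {n d : ℕ} (G G' : BGraph (Fin n) (Fin d))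
    (hne : G ≠ G')
    (hLD : ∀ i, LD G i = LD G' i) (hRD : ∀ j, RD G j = RD G' j) :
    ¬ Compatible G G' := by
  intro hcomp
  have hRB : (G \ G').image Prod.snd ⊆ (G' \ G).image Prod.snd :=
    image_sdiff_subset_of_card_fiber_eq Prod.snd fun j => (hRD j).symm
  have hBR : (G' \ G).image Prod.fst ⊆ (G \ G').image Prod.fst :=
    image_sdiff_subset_of_card_fiber_eq Prod.fst hLD
  have hR : (G \ G').Nonempty := by
    by_cases hGG' : G ⊆ G'
    · have hB : (G' \ G).Nonempty := sdiff_nonempty.2 fun h => hne (hGG'.antisymm h)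
      exact image_nonempty.1 ((hB.image Prod.fst).mono hBR)
    · exact sdiff_nonempty.2 hGG'
  obtain ⟨I, J, M, M', ⟨e, he⟩, hMR, hM'B, hM, hM'⟩ := exists_alternating_matchings hR hRB hBR
  have hMM' : M = M' := hcomp I J M M' (hMR.trans sdiff_subset) (hM'B.trans sdiff_subset) hM hM'
  exact (mem_sdiff.1 (hMR he)).2 (mem_sdiff.1 (hM'B (hMM' ▸ he))).1

theorem statement15 {n d : ℕ} (G G' : BGraph (Fin n) (Fin d))
    (hG : Acyclic G) (hG' : Acyclic G') (hne : G ≠ G')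
    (hLD : ∀ i, LD G i = LD G' i) (hRD : ∀ j, RD G j = RD G' j) :
    ¬ Compatible G G' :=
  statement15_general G G' hne hLD hRD
end
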